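/- For every positive integer m and every n ∈ ℕ: E_n(A) ≤ (π^{2m}/((2m)! K(m))) · ∫_0^π ω̃_m(A, u/λ_n) sin u du, where K(m) := Σ_{j=0}^m (−1)^j π^{2m−2j}/(2m−2j)! + (−1)^m, so that (2m)! K(m) = ∫_0^π u^{2m} sin u du. -/

import Mathlib

/-!
Fix `γ ∈ Γ`. For `|k| ≥ n` we have `|λ_k| ≥ λ_n`, so with `w = |λ_k| / λ_n ≥ 1` the
one-variable inequality `∫₀^π (u/π)^{2m} sin u du ≤ ∫₀^π φ̃_m(w u) sin u du` bounds
`γ_k |A_k|` by a multiple of `∫₀^π γ_k φ̃_m(λ_k u / λ_n) |A_k| sin u du`. Summing over `k` and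
exchanging sum and integral (in `ℝ≥0∞`) puts `ω̃_m(A, u/λ_n)` under the integral, and
integrating by parts twice gives `∫₀^π u^{2m} sin u du = (2m)! K(m)`.

For `1 ≤ w ≤ 2` the one-variable inequality holds pointwise: `(t/π)² ≤ 1 - sinc t` on
`[0, π]` comes from the first factor of Euler's product for `sin`, and `sinc ≤ 0` on
`[π, 2π]`. For `w ≥ 2` and `m ≥ 2` both sides are compared with `1/3`, using the minorant
`sin t (sin t - 1) / 2` of `φ̃_m(t)` (`t ≥ 0`), which does not depend on `m` and has an
explicit integral against `sin u`. For `m = 1` it suffices that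
`sinc (w u) sin u ≤ sinc u / w`.
-/

open MeasureTheory Real Filter Finset intervalIntegral
open scoped ENNReal Topology

noncomputable section

/-- `M` is an Orlicz function: nondecreasing and convex on `[0,∞)`, `M 0 = 0`,
and `M t → ∞` as `t → ∞`. -/
def IsOrlicz (M : ℝ → ℝ) : Prop :=
  MonotoneOn M (Set.Ici 0) ∧ ConvexOn ℝ (Set.Ici 0) M ∧ M 0 = 0 ∧
    Filter.Tendsto M Filter.atTop Filter.atTop

/-- The Legendre conjugate `M*(v) = sup {uv - M u : u ≥ 0}`, valued in `[0,∞]`. -/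
def Mstar (M : ℝ → ℝ) (v : ℝ) : ℝ≥0∞ :=
  ⨆ (u : ℝ) (_ : 0 ≤ u), ENNReal.ofReal (u * v - M u)

/-- The set `Γ` of positive sequences `γ` with `Σ_k M_k^*(γ_k) ≤ 1`. -/
def GammaSet (M : ℤ → ℝ → ℝ) : Set (ℤ → ℝ) :=
  {γ | (∀ k, 0 < γ k) ∧ ∑' k : ℤ, Mstar (M k) (γ k) ≤ 1}

/-- The Orlicz norm `‖A‖_M = sup_{γ ∈ Γ} Σ_k γ_k |A_k|` of a sequence of
Fourier coefficients, valued in `[0,∞]`. -/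
def orliczNorm (M : ℤ → ℝ → ℝ) (A : ℤ → ℂ) : ℝ≥0∞ :=
  ⨆ γ ∈ GammaSet M, ∑' k : ℤ, ENNReal.ofReal (γ k * ‖A k‖)

/-- The best approximation `E_n(A) = sup_{γ ∈ Γ} Σ_{|k| ≥ n} γ_k |A_k|`. -/
def bestE (M : ℤ → ℝ → ℝ) (A : ℤ → ℂ) (n : ℕ) : ℝ≥0∞ :=
  ⨆ γ ∈ GammaSet M, ∑' k : ℤ,
    if (n : ℤ) ≤ |k| then ENNReal.ofReal (γ k * ‖A k‖) else 0

/-- The generalized modulus of smoothness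
`ω_φ(A, δ) = sup_{|h| ≤ δ} sup_{γ ∈ Γ} Σ_k γ_k φ(λ_k h) |A_k|`. -/
def genMod (Λ : ℤ → ℝ) (M : ℤ → ℝ → ℝ) (A : ℤ → ℂ) (φ : ℝ → ℝ) (δ : ℝ) : ℝ≥0∞ :=
  ⨆ (h : ℝ) (_ : |h| ≤ δ), ⨆ γ ∈ GammaSet M, ∑' k : ℤ,
    ENNReal.ofReal (γ k * φ (Λ k * h) * ‖A k‖)

/-- The class `Φ`: continuous bounded nonnegative even functions vanishing at `0`
whose zero set has Lebesgue measure zero. -/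
def IsPhi (φ : ℝ → ℝ) : Prop :=
  Continuous φ ∧ (∃ C, ∀ t, φ t ≤ C) ∧ (∀ t, 0 ≤ φ t) ∧ φ 0 = 0 ∧
    (∀ t, φ (-t) = φ t) ∧ MeasureTheory.volume {t : ℝ | φ t = 0} = 0

/-- A symmetric sequence of Fourier exponents: `λ_0 = 0`, `λ_{-k} = -λ_k`,
and `0 < λ_k < λ_{k+1}` for `k ≥ 1`. -/
def IsExponents (Λ : ℤ → ℝ) : Prop :=
  Λ 0 = 0 ∧ (∀ k, Λ (-k) = -Λ k) ∧ (∀ k : ℤ, 1 ≤ k → 0 < Λ k) ∧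
    (∀ k : ℤ, 1 ≤ k → Λ k < Λ (k + 1))

/-- `φ_α(t) = 2^{α/2} (1 - cos t)^{α/2}`, so that `ω_{φ_α} = ω_α`. -/
def phiAlpha (α : ℝ) (t : ℝ) : ℝ := 2 ^ (α / 2) * (1 - Real.cos t) ^ (α / 2)

/-- `sinc t = sin t / t` for `t ≠ 0`, `sinc 0 = 1`. -/
def sincFn (t : ℝ) : ℝ := if t = 0 then 1 else Real.sin t / t

/-- `φ̃_m(t) = (1 - sinc t)^m`, so that `ω_{φ̃_m} = ω̃_m`. -/
def phiTilde (m : ℕ) (t : ℝ) : ℝ := (1 - sincFn t) ^ m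

lemma sincFn_eq_sinc : sincFn = sinc := rfl

lemma phiTilde_neg (m : ℕ) (t : ℝ) : phiTilde m (-t) = phiTilde m t := by
  simp [phiTilde, sincFn_eq_sinc]

lemma phiTilde_nonneg (m : ℕ) (t : ℝ) : 0 ≤ phiTilde m t :=
  pow_nonneg (sub_nonneg.2 (sinc_le_one t)) m

lemma phiTilde_le_two_pow (m : ℕ) (t : ℝ) : phiTilde m t ≤ 2 ^ m :=
  pow_le_pow_left₀ (sub_nonneg.2 (sinc_le_one t)) (by linarith [neg_one_le_sinc t]) m

@[fun_prop]
lemma continuous_phiTilde (m : ℕ) : Continuous (phiTilde m) := by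
  unfold phiTilde; rw [sincFn_eq_sinc]; fun_prop

lemma sin_pi_mul_le_mul_one_sub_sq {x : ℝ} (h0 : 0 ≤ x) (h1 : x ≤ 1) :
    sin (π * x) ≤ π * x * (1 - x ^ 2) := by
  refine le_of_tendsto (tendsto_euler_sin_prod x) (eventually_atTop.2 ⟨1, fun n hn => ?_⟩)
  obtain ⟨n, rfl⟩ := Nat.exists_eq_add_of_le' hn
  have hx2 : x ^ 2 ≤ 1 := pow_le_one₀ h0 h1
  have hprod : ∏ j ∈ range n, (1 - x ^ 2 / ((↑(j + 1) : ℝ) + 1) ^ 2) ≤ 1 := by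
    refine prod_le_one (fun j _ => ?_) (fun j _ => ?_)
    · rw [sub_nonneg, div_le_one (by positivity)]
      have : (1 : ℝ) ≤ (↑(j + 1) : ℝ) + 1 := by simp; positivity
      nlinarith
    · have : 0 ≤ x ^ 2 / ((↑(j + 1) : ℝ) + 1) ^ 2 := by positivity
      linarith
  rw [prod_range_succ']
  have hπx : 0 ≤ π * x := mul_nonneg pi_pos.le h0
  have := mul_le_mul_of_nonneg_left (mul_le_of_le_one_left (sub_nonneg.2 hx2) hprod) hπx
  simpa using this

lemma sin_le_mul_one_sub_div_pi_sq {t : ℝ} (h0 : 0 ≤ t) (h1 : t ≤ π) :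
    sin t ≤ t * (1 - (t / π) ^ 2) := by
  have h := sin_pi_mul_le_mul_one_sub_sq (div_nonneg h0 pi_pos.le) ((div_le_one pi_pos).2 h1)
  rwa [mul_div_cancel₀ t pi_ne_zero] at h

lemma sq_div_pi_le_one_sub_sinc {t : ℝ} (h0 : 0 ≤ t) (h1 : t ≤ π) :
    (t / π) ^ 2 ≤ 1 - sinc t := by
  rcases h0.eq_or_lt with rfl | ht
  · simp
  rw [sinc_of_ne_zero ht.ne', le_sub_comm, div_le_iff₀ ht, mul_comm]
  exact sin_le_mul_one_sub_div_pi_sq h0 h1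

lemma sinc_nonpos_of_sin_nonpos {t : ℝ} (ht : 0 < t) (hs : sin t ≤ 0) : sinc t ≤ 0 := by
  rw [sinc_of_ne_zero ht.ne']
  exact div_nonpos_of_nonpos_of_nonneg hs ht.le

lemma sin_mul_sin_sub_one_div_two_le_phiTilde (m : ℕ) {t : ℝ} (ht : 0 ≤ t) :
    sin t * (sin t - 1) / 2 ≤ phiTilde m t := by
  rcases lt_or_ge 0 (sin t) with hs | hs
  · have : sin t * (sin t - 1) / 2 ≤ 0 := by nlinarith [sin_le_one t]
    exact this.trans (phiTilde_nonneg m t)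
  rcases ht.eq_or_lt with rfl | ht
  · simpa using phiTilde_nonneg m 0
  have h1 : 1 ≤ 1 - sinc t := by linarith [sinc_nonpos_of_sin_nonpos ht hs]
  calc sin t * (sin t - 1) / 2 ≤ 1 := by nlinarith [neg_one_le_sin t]
    _ ≤ phiTilde m t := one_le_pow₀ h1

lemma integral_pow_add_two_mul_sin (j : ℕ) :
    ∫ u in (0 : ℝ)..π, u ^ (j + 2) * sin u
      = π ^ (j + 2) - ((j + 2) * (j + 1) : ℝ) * ∫ u in (0 : ℝ)..π, u ^ j * sin u := by
  have hsin := integral_mul_deriv_eq_deriv_mul (a := 0) (b := π)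
    (u := fun x : ℝ => x ^ (j + 2)) (u' := fun x => (j + 2 : ℝ) * x ^ (j + 1))
    (v := fun x => -cos x) (v' := sin)
    (fun x _ => by simpa using hasDerivAt_pow (j + 2) x)
    (fun x _ => by simpa using (hasDerivAt_cos x).fun_neg)
    (by apply Continuous.intervalIntegrable; fun_prop)
    (continuous_sin.intervalIntegrable 0 π)
  have hcos := integral_mul_deriv_eq_deriv_mul (a := 0) (b := π)
    (u := fun x : ℝ => x ^ (j + 1)) (u' := fun x => (j + 1 : ℝ) * x ^ j)
    (v := sin) (v' := cos)
    (fun x _ => by simpa using hasDerivAt_pow (j + 1) x)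
    (fun x _ => hasDerivAt_sin x)
    (by apply Continuous.intervalIntegrable; fun_prop)
    (continuous_cos.intervalIntegrable 0 π)
  simp only [mul_neg, mul_assoc, intervalIntegral.integral_neg,
    intervalIntegral.integral_const_mul] at hsin hcos
  simp only [cos_pi, sin_pi, cos_zero, sin_zero] at hsin hcos
  rw [hsin, hcos]
  ring

lemma integral_pow_two_mul_mul_sin (m : ℕ) :
    ∫ u in (0 : ℝ)..π, u ^ (2 * m) * sin u
      = (Nat.factorial (2 * m) : ℝ) *
        ((∑ j ∈ range (m + 1),
            (-1 : ℝ) ^ j * π ^ (2 * (m - j)) / (Nat.factorial (2 * (m - j)) : ℝ))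
          + (-1 : ℝ) ^ m) := by
  induction m with
  | zero => norm_num [integral_sin]
  | succ m ih =>
    have hsum : ∑ j ∈ range (m + 2),
          (-1 : ℝ) ^ j * π ^ (2 * (m + 1 - j)) / (Nat.factorial (2 * (m + 1 - j)) : ℝ)
        = π ^ (2 * m + 2) / (Nat.factorial (2 * m + 2) : ℝ)
          - ∑ j ∈ range (m + 1),
              (-1 : ℝ) ^ j * π ^ (2 * (m - j)) / (Nat.factorial (2 * (m - j)) : ℝ) := by
      rw [sum_range_succ', add_comm, sub_eq_add_neg, ← sum_neg_distrib]
      congr 1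
      · simp [mul_add]
      · refine sum_congr rfl fun j _ => ?_
        rw [Nat.add_sub_add_right, pow_succ]
        ring
    have hfac : (Nat.factorial (2 * m + 2) : ℝ)
        = (2 * m + 2) * (2 * m + 1) * (Nat.factorial (2 * m) : ℝ) := by
      rw [Nat.factorial_succ, Nat.factorial_succ]; push_cast; ring
    rw [show 2 * (m + 1) = 2 * m + 2 by ring, integral_pow_add_two_mul_sin, ih, hsum, hfac]
    have : (Nat.factorial (2 * m) : ℝ) ≠ 0 := by positivity
    field_simp
    push_cast
    ring

lemma integral_div_pi_pow_mul_sin (k : ℕ) :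
    ∫ u in (0 : ℝ)..π, (u / π) ^ k * sin u
      = (∫ u in (0 : ℝ)..π, u ^ k * sin u) / π ^ k := by
  simp only [div_pow, div_mul_eq_mul_div, intervalIntegral.integral_div]

lemma integral_sin_mul_cos_mul {w : ℝ} (hw : w ^ 2 ≠ 1) :
    ∫ u in (0 : ℝ)..π, sin u * cos (w * u) = (1 + cos (w * π)) / (1 - w ^ 2) := by
  have h1 : 1 - w ≠ 0 := fun h => hw (by nlinarith)
  have h2 : 1 + w ≠ 0 := fun h => hw (by nlinarith)
  have hF : ∀ u, HasDerivAt
      (fun u => -(cos ((1 + w) * u) / (2 * (1 + w))) - cos ((1 - w) * u) / (2 * (1 - w)))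
      (sin u * cos (w * u)) u := fun u => by
    have d1 := ((hasDerivAt_id u).const_mul (1 + w)).cos
    have d2 := ((hasDerivAt_id u).const_mul (1 - w)).cos
    refine ((d1.div_const _).neg.sub (d2.div_const _)).congr_deriv ?_
    simp only [id, show (1 + w) * u = u + w * u by ring, show (1 - w) * u = u - w * u by ring,
      sin_add, sin_sub]
    field_simp
    ring
  rw [integral_eq_sub_of_hasDerivAt (fun u _ => hF u)
    (by apply Continuous.intervalIntegrable; fun_prop)]
  simp only [show (1 + w) * π = w * π + π by ring, show (1 - w) * π = π - w * π by ring,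
    cos_add_pi, cos_pi_sub, mul_zero, cos_zero]
  field_simp
  ring

lemma integral_sin_mul_sin_mul {w : ℝ} (hw : w ^ 2 ≠ 1) :
    ∫ u in (0 : ℝ)..π, sin u * sin (w * u) = sin (w * π) / (1 - w ^ 2) := by
  have h1 : 1 - w ≠ 0 := fun h => hw (by nlinarith)
  have h2 : 1 + w ≠ 0 := fun h => hw (by nlinarith)
  have hF : ∀ u, HasDerivAt
      (fun u => sin ((1 - w) * u) / (2 * (1 - w)) - sin ((1 + w) * u) / (2 * (1 + w)))
      (sin u * sin (w * u)) u := fun u => by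
    have d1 := ((hasDerivAt_id u).const_mul (1 - w)).sin
    have d2 := ((hasDerivAt_id u).const_mul (1 + w)).sin
    refine ((d1.div_const _).sub (d2.div_const _)).congr_deriv ?_
    simp only [id, show (1 + w) * u = u + w * u by ring, show (1 - w) * u = u - w * u by ring,
      cos_add, cos_sub]
    field_simp
    ring
  rw [integral_eq_sub_of_hasDerivAt (fun u _ => hF u)
    (by apply Continuous.intervalIntegrable; fun_prop)]
  simp only [show (1 + w) * π = w * π + π by ring, show (1 - w) * π = π - w * π by ring,
    sin_add_pi, sin_pi_sub, mul_zero, sin_zero]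
  field_simp
  ring

lemma integral_div_pi_pow_mul_sin_le_integral_phiTilde_of_le_two (m : ℕ) {w : ℝ}
    (hw1 : 1 ≤ w) (hw2 : w ≤ 2) :
    ∫ u in (0 : ℝ)..π, (u / π) ^ (2 * m) * sin u
      ≤ ∫ u in (0 : ℝ)..π, phiTilde m (w * u) * sin u := by
  refine integral_mono_on pi_pos.le (by apply Continuous.intervalIntegrable; fun_prop)
    (by apply Continuous.intervalIntegrable; fun_prop) fun u hu => ?_
  obtain ⟨hu0, huπ⟩ := hu
  refine mul_le_mul_of_nonneg_right ?_ (sin_nonneg_of_nonneg_of_le_pi hu0 huπ)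
  rw [pow_mul, phiTilde, sincFn_eq_sinc]
  refine pow_le_pow_left₀ (sq_nonneg _) ?_ m
  rcases le_total (w * u) π with hle | hge
  · calc (u / π) ^ 2 ≤ (w * u / π) ^ 2 := by gcongr; nlinarith
      _ ≤ 1 - sinc (w * u) := sq_div_pi_le_one_sub_sinc (by positivity) hle
  · have hsin : sin (w * u) ≤ 0 := by
      rw [← sin_sub_two_pi]
      exact sin_nonpos_of_nonpos_of_neg_pi_le (by nlinarith) (by linarith)
    have hsinc := sinc_nonpos_of_sin_nonpos (pi_pos.trans_le hge) hsin
    have : (u / π) ^ 2 ≤ 1 := pow_le_one₀ (by positivity) ((div_le_one pi_pos).2 huπ)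
    linarith

lemma integral_sq_mul_sin : ∫ u in (0 : ℝ)..π, u ^ 2 * sin u = π ^ 2 - 4 := by
  have h := integral_pow_add_two_mul_sin 0
  norm_num [integral_sin] at h
  linarith

lemma integral_div_pi_sq_mul_sin_le_integral_phiTilde_one {w : ℝ} (hw : 2 ≤ w) :
    ∫ u in (0 : ℝ)..π, (u / π) ^ (2 * 1) * sin u
      ≤ ∫ u in (0 : ℝ)..π, phiTilde 1 (w * u) * sin u := by
  have hpoint : ∀ u ∈ Set.Icc 0 π,
      sin u - (1 - (u / π) ^ 2) / 2 ≤ phiTilde 1 (w * u) * sin u := by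
    rintro u ⟨hu0, huπ⟩
    rw [phiTilde, sincFn_eq_sinc, pow_one, sub_mul, one_mul, sub_le_sub_iff_left]
    rcases hu0.eq_or_lt with rfl | hu
    · simp
    have hsin := sin_nonneg_of_nonneg_of_le_pi hu0 huπ
    have hsq : 0 ≤ 1 - (u / π) ^ 2 :=
      sub_nonneg.2 (pow_le_one₀ (by positivity) ((div_le_one pi_pos).2 huπ))
    have hwu : 0 < w * u := by positivity
    calc sinc (w * u) * sin u ≤ (w * u)⁻¹ * sin u := by
          gcongr
          simpa [abs_of_pos hwu] using sinc_le_inv_abs hwu.ne'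
      _ = (sin u / u) / w := by field_simp
      _ ≤ (1 - (u / π) ^ 2) / w := by
          gcongr
          rw [div_le_iff₀ hu, mul_comm]
          exact sin_le_mul_one_sub_div_pi_sq hu0 huπ
      _ ≤ (1 - (u / π) ^ 2) / 2 := div_le_div_of_nonneg_left hsq two_pos hw
  have hlower : ∫ u in (0 : ℝ)..π, (sin u - (1 - (u / π) ^ 2) / 2) = 2 - π / 3 := by
    have hF : ∀ u, HasDerivAt (fun u => -cos u - u / 2 + u ^ 3 / (6 * π ^ 2))
        (sin u - (1 - (u / π) ^ 2) / 2) u := fun u => by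
      refine (((hasDerivAt_cos u).fun_neg.fun_sub ((hasDerivAt_id' u).div_const 2)).fun_add
        ((hasDerivAt_pow 3 u).div_const _)).congr_deriv ?_
      field_simp
      ring
    rw [integral_eq_sub_of_hasDerivAt (fun u _ => hF u)
      (by apply Continuous.intervalIntegrable; fun_prop)]
    simp only [cos_pi, cos_zero]
    field_simp
    ring
  rw [integral_div_pi_pow_mul_sin, integral_sq_mul_sin]
  calc (π ^ 2 - 4) / π ^ 2 ≤ 2 - π / 3 := by
        rw [div_le_iff₀ (by positivity)]
        nlinarith [pi_lt_d2, pi_gt_three]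
    _ = _ := hlower.symm
    _ ≤ _ := integral_mono_on pi_pos.le (by apply Continuous.intervalIntegrable; fun_prop)
        (by apply Continuous.intervalIntegrable; fun_prop) hpoint

lemma integral_div_pi_pow_mul_sin_le_one_third {m : ℕ} (hm : 2 ≤ m) :
    ∫ u in (0 : ℝ)..π, (u / π) ^ (2 * m) * sin u ≤ 1 / 3 := by
  have h4 : ∫ u in (0 : ℝ)..π, u ^ 4 * sin u = π ^ 4 - 12 * (π ^ 2 - 4) := by
    rw [integral_pow_add_two_mul_sin 2, integral_sq_mul_sin]; norm_num
  calc ∫ u in (0 : ℝ)..π, (u / π) ^ (2 * m) * sin u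
      ≤ ∫ u in (0 : ℝ)..π, (u / π) ^ 4 * sin u := by
        refine integral_mono_on pi_pos.le (by apply Continuous.intervalIntegrable; fun_prop)
          (by apply Continuous.intervalIntegrable; fun_prop) fun u ⟨hu0, huπ⟩ => ?_
        refine mul_le_mul_of_nonneg_right ?_ (sin_nonneg_of_nonneg_of_le_pi hu0 huπ)
        exact pow_le_pow_of_le_one (by positivity) ((div_le_one pi_pos).2 huπ) (by omega)
    _ ≤ 1 / 3 := by
        have hπ2 : (π ^ 2 - 6) * (π ^ 2 - 12) ≤ 0 :=
          mul_nonpos_of_nonneg_of_nonpos (by nlinarith [pi_gt_three])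
            (by nlinarith [pi_lt_d2, pi_gt_three])
        rw [integral_div_pi_pow_mul_sin, h4, div_le_iff₀ (by positivity)]
        nlinarith

lemma one_third_le_integral_phiTilde_mul_sin (m : ℕ) {w : ℝ} (hw : 2 ≤ w) :
    1 / 3 ≤ ∫ u in (0 : ℝ)..π, phiTilde m (w * u) * sin u := by
  have hcos := integral_sin_mul_cos_mul (w := 2 * w) (by nlinarith)
  have hsin := integral_sin_mul_sin_mul (w := w) (by nlinarith)
  have hexpand : ∀ u, sin (w * u) * (sin (w * u) - 1) / 2 * sin u
      = 1 / 4 * sin u - 1 / 4 * (sin u * cos (2 * w * u)) - 1 / 2 * (sin u * sin (w * u)) := by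
    intro u
    rw [show 2 * w * u = 2 * (w * u) by ring, cos_two_mul]
    linear_combination (sin u / 2) * sin_sq_add_cos_sq (w * u)
  have hq : ∫ u in (0 : ℝ)..π, sin (w * u) * (sin (w * u) - 1) / 2 * sin u
      = 1 / 2 - 1 / 4 * ((1 + cos (2 * w * π)) / (1 - (2 * w) ^ 2))
          - 1 / 2 * (sin (w * π) / (1 - w ^ 2)) := by
    simp only [hexpand]
    rw [intervalIntegral.integral_sub (by apply Continuous.intervalIntegrable; fun_prop)
        (by apply Continuous.intervalIntegrable; fun_prop),
      intervalIntegral.integral_sub (by apply Continuous.intervalIntegrable; fun_prop)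
        (by apply Continuous.intervalIntegrable; fun_prop),
      intervalIntegral.integral_const_mul, intervalIntegral.integral_const_mul,
      intervalIntegral.integral_const_mul, integral_sin, hcos, hsin]
    norm_num
  have hcos_nonpos : (1 + cos (2 * w * π)) / (1 - (2 * w) ^ 2) ≤ 0 :=
    div_nonpos_of_nonneg_of_nonpos (by linarith [neg_one_le_cos (2 * w * π)]) (by nlinarith)
  have hsin_le : sin (w * π) / (1 - w ^ 2) ≤ 1 / 3 := by
    rw [div_le_iff_of_neg (by nlinarith)]
    nlinarith [neg_one_le_sin (w * π)]
  calc 1 / 3 ≤ ∫ u in (0 : ℝ)..π, sin (w * u) * (sin (w * u) - 1) / 2 * sin u := by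
        rw [hq]; linarith
    _ ≤ _ := integral_mono_on pi_pos.le (by apply Continuous.intervalIntegrable; fun_prop)
        (by apply Continuous.intervalIntegrable; fun_prop) fun u ⟨hu0, huπ⟩ =>
          mul_le_mul_of_nonneg_right
            (sin_mul_sin_sub_one_div_two_le_phiTilde m (by positivity))
            (sin_nonneg_of_nonneg_of_le_pi hu0 huπ)

lemma integral_div_pi_pow_mul_sin_le_integral_phiTilde (m : ℕ) {w : ℝ} (hw : 1 ≤ w) :
    ∫ u in (0 : ℝ)..π, (u / π) ^ (2 * m) * sin u
      ≤ ∫ u in (0 : ℝ)..π, phiTilde m (w * u) * sin u := by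
  rcases le_total w 2 with hw2 | hw2
  · exact integral_div_pi_pow_mul_sin_le_integral_phiTilde_of_le_two m hw hw2
  rcases m with _ | _ | m
  · simp [phiTilde]
  · exact integral_div_pi_sq_mul_sin_le_integral_phiTilde_one hw2
  · exact (integral_div_pi_pow_mul_sin_le_one_third (by omega)).trans
      (one_third_le_integral_phiTilde_mul_sin _ hw2)

lemma IsExponents.strictMonoOn {Λ : ℤ → ℝ} (hΛ : IsExponents Λ) :
    StrictMonoOn Λ (Set.Ici 1) :=
  strictMonoOn_of_lt_add_one Set.ordConnected_Ici fun a _ ha _ => hΛ.2.2.2 a ha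

lemma IsExponents.le_abs_apply {Λ : ℤ → ℝ} (hΛ : IsExponents Λ) {n k : ℤ} (hn : 1 ≤ n)
    (hk : n ≤ |k|) : Λ n ≤ |Λ k| := by
  have hpos : 0 < Λ |k| := hΛ.2.2.1 _ (hn.trans hk)
  have habs : |Λ k| = Λ |k| := by
    rcases abs_choice k with h | h <;> rw [h] at hpos ⊢
    · exact abs_of_pos hpos
    · rw [hΛ.2.1] at hpos ⊢
      exact abs_of_neg (neg_pos.1 hpos)
  rw [habs]
  exact hΛ.strictMonoOn.monotoneOn hn (hn.trans hk) hk

lemma ofReal_intervalIntegral_eq_setLIntegral_Ioc {f : ℝ → ℝ} {a b : ℝ} (hab : a ≤ b)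
    (hf : IntervalIntegrable f volume a b) (hf0 : ∀ u ∈ Set.Ioc a b, 0 ≤ f u) :
    ENNReal.ofReal (∫ u in a..b, f u) = ∫⁻ u in Set.Ioc a b, ENNReal.ofReal (f u) := by
  rw [integral_of_le hab]
  exact ofReal_integral_eq_lintegral_ofReal
    ((intervalIntegrable_iff_integrableOn_Ioc_of_le hab).1 hf)
    ((ae_restrict_iff' measurableSet_Ioc).2 (ae_of_all _ hf0))

section Moduli

variable (Λ : ℤ → ℝ) (M : ℤ → ℝ → ℝ) (A : ℤ → ℂ)

lemma genMod_le_mul_orliczNorm {φ : ℝ → ℝ} {C : ℝ} (hφ : ∀ t, φ t ≤ C) (δ : ℝ) :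
    genMod Λ M A φ δ ≤ ENNReal.ofReal C * orliczNorm M A := by
  refine iSup₂_le fun h _ => iSup₂_le fun γ hγ => ?_
  calc ∑' k, ENNReal.ofReal (γ k * φ (Λ k * h) * ‖A k‖)
      ≤ ∑' k, ENNReal.ofReal C * ENNReal.ofReal (γ k * ‖A k‖) := by
        refine ENNReal.tsum_le_tsum fun k => ?_
        rw [← ENNReal.ofReal_mul' (mul_nonneg (hγ.1 k).le (norm_nonneg _))]
        refine ENNReal.ofReal_le_ofReal ?_
        have hγA := mul_nonneg (hγ.1 k).le (norm_nonneg (A k))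
        nlinarith [hφ (Λ k * h)]
    _ = ENNReal.ofReal C * ∑' k, ENNReal.ofReal (γ k * ‖A k‖) := ENNReal.tsum_mul_left
    _ ≤ ENNReal.ofReal C * orliczNorm M A := by
        gcongr
        exact le_iSup₂_of_le γ hγ le_rfl

lemma genMod_ne_top (hA : orliczNorm M A ≠ ⊤) {φ : ℝ → ℝ} {C : ℝ} (hφ : ∀ t, φ t ≤ C)
    (δ : ℝ) : genMod Λ M A φ δ ≠ ⊤ :=
  ne_top_of_le_ne_top (ENNReal.mul_ne_top ENNReal.ofReal_ne_top hA)
    (genMod_le_mul_orliczNorm Λ M A hφ δ)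

lemma genMod_mono (φ : ℝ → ℝ) : Monotone (genMod Λ M A φ) :=
  fun _ _ hδ => iSup₂_mono' fun h hh => ⟨h, hh.trans hδ, le_rfl⟩

lemma tsum_le_genMod {φ : ℝ → ℝ} {γ : ℤ → ℝ} (hγ : γ ∈ GammaSet M) {h δ : ℝ}
    (hh : |h| ≤ δ) :
    ∑' k, ENNReal.ofReal (γ k * φ (Λ k * h) * ‖A k‖) ≤ genMod Λ M A φ δ :=
  le_iSup₂_of_le h hh (le_iSup₂_of_le γ hγ le_rfl)

lemma bestE_mul_le_lintegral_genMod {φ : ℝ → ℝ} (hφ : Measurable φ) {n : ℕ} {L c : ℝ}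
    (hL : 0 < L)
    (hc : ∀ k : ℤ, (n : ℤ) ≤ |k| →
      ENNReal.ofReal c ≤ ∫⁻ u in Set.Ioc 0 π, ENNReal.ofReal (φ (Λ k * (u / L)) * sin u)) :
    bestE M A n * ENNReal.ofReal c
      ≤ ∫⁻ u in Set.Ioc 0 π, genMod Λ M A φ (u / L) * ENNReal.ofReal (sin u) := by
  rw [bestE, ENNReal.iSup_mul]
  refine iSup_le fun γ => ?_
  rw [ENNReal.iSup_mul]
  refine iSup_le fun hγ => ?_
  calc (∑' k : ℤ, if (n : ℤ) ≤ |k| then ENNReal.ofReal (γ k * ‖A k‖) else 0)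
        * ENNReal.ofReal c
      = ∑' k : ℤ, (if (n : ℤ) ≤ |k| then ENNReal.ofReal (γ k * ‖A k‖) else 0)
          * ENNReal.ofReal c := ENNReal.tsum_mul_right.symm
    _ ≤ ∑' k, ∫⁻ u in Set.Ioc 0 π,
          ENNReal.ofReal (γ k * ‖A k‖) * ENNReal.ofReal (φ (Λ k * (u / L)) * sin u) := by
        refine ENNReal.tsum_le_tsum fun k => ?_
        split_ifs with hk
        · rw [lintegral_const_mul' _ _ ENNReal.ofReal_ne_top]
          gcongr
          exact hc k hk
        · simp
    _ = ∫⁻ u in Set.Ioc 0 π, ∑' k,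
          ENNReal.ofReal (γ k * ‖A k‖) * ENNReal.ofReal (φ (Λ k * (u / L)) * sin u) :=
        (lintegral_tsum fun k => by fun_prop).symm
    _ ≤ ∫⁻ u in Set.Ioc 0 π, genMod Λ M A φ (u / L) * ENNReal.ofReal (sin u) := by
        refine setLIntegral_mono' measurableSet_Ioc fun u ⟨hu0, huπ⟩ => ?_
        have hsin := sin_nonneg_of_nonneg_of_le_pi hu0.le huπ
        calc ∑' k, ENNReal.ofReal (γ k * ‖A k‖) * ENNReal.ofReal (φ (Λ k * (u / L)) * sin u)
            = (∑' k, ENNReal.ofReal (γ k * φ (Λ k * (u / L)) * ‖A k‖))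
                * ENNReal.ofReal (sin u) := by
              rw [← ENNReal.tsum_mul_right]
              refine tsum_congr fun k => ?_
              rw [← ENNReal.ofReal_mul (mul_nonneg (hγ.1 k).le (norm_nonneg _)),
                ← ENNReal.ofReal_mul' hsin]
              ring_nf
          _ ≤ genMod Λ M A φ (u / L) * ENNReal.ofReal (sin u) := by
              gcongr
              exact tsum_le_genMod Λ M A hγ (abs_of_nonneg (by positivity)).le

theorem bestE_toReal_le_integral_genMod_div {φ : ℝ → ℝ} (hφ : Continuous φ)
    (hφ0 : ∀ t, 0 ≤ φ t) {C : ℝ} (hφC : ∀ t, φ t ≤ C) (hA : orliczNorm M A ≠ ⊤) {n : ℕ}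
    {L c : ℝ} (hL : 0 < L) (hc : 0 < c)
    (hcφ : ∀ k : ℤ, (n : ℤ) ≤ |k| → c ≤ ∫ u in (0 : ℝ)..π, φ (Λ k * (u / L)) * sin u) :
    (bestE M A n).toReal
      ≤ (∫ u in (0 : ℝ)..π, (genMod Λ M A φ (u / L)).toReal * sin u) / c := by
  have hfin := genMod_ne_top Λ M A hA hφC
  have hsin : ∀ u ∈ Set.Ioc 0 π, 0 ≤ sin u := fun u hu =>
    sin_nonneg_of_nonneg_of_le_pi hu.1.le hu.2
  have hmono : Monotone fun u => (genMod Λ M A φ (u / L)).toReal := fun a b hab =>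
    ENNReal.toReal_mono (hfin _) (genMod_mono Λ M A φ (div_le_div_of_nonneg_right hab hL.le))
  have hRHS : ∫⁻ u in Set.Ioc 0 π, genMod Λ M A φ (u / L) * ENNReal.ofReal (sin u)
      = ENNReal.ofReal (∫ u in (0 : ℝ)..π, (genMod Λ M A φ (u / L)).toReal * sin u) := by
    rw [ofReal_intervalIntegral_eq_setLIntegral_Ioc pi_pos.le
      (hmono.intervalIntegrable.mul_continuousOn continuous_sin.continuousOn)
      fun u hu => mul_nonneg ENNReal.toReal_nonneg (hsin u hu)]
    refine setLIntegral_congr_fun measurableSet_Ioc fun u _ => ?_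
    rw [ENNReal.ofReal_mul ENNReal.toReal_nonneg, ENNReal.ofReal_toReal (hfin _)]
  have hmain := bestE_mul_le_lintegral_genMod Λ M A hφ.measurable hL fun k hk => by
    rw [← ofReal_intervalIntegral_eq_setLIntegral_Ioc pi_pos.le
      (by apply Continuous.intervalIntegrable; fun_prop)
      fun u hu => mul_nonneg (hφ0 _) (hsin u hu)]
    exact ENNReal.ofReal_le_ofReal (hcφ k hk)
  rw [hRHS] at hmain
  have hI : 0 ≤ ∫ u in (0 : ℝ)..π, (genMod Λ M A φ (u / L)).toReal * sin u :=
    integral_nonneg pi_pos.le fun u hu =>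
      mul_nonneg ENNReal.toReal_nonneg (sin_nonneg_of_nonneg_of_le_pi hu.1 hu.2)
  rw [le_div_iff₀ hc, ← ENNReal.toReal_ofReal hc.le, ← ENNReal.toReal_mul]
  exact ENNReal.toReal_le_of_le_ofReal hI hmain

end Moduli

theorem jackson_steklov_modulus_general
    (Λ : ℤ → ℝ) (M : ℤ → ℝ → ℝ) (A : ℤ → ℂ)
    (hΛ : IsExponents Λ) (hA : orliczNorm M A ≠ ⊤)
    (m : ℕ) (n : ℕ) (hn : 1 ≤ n) :
    (bestE M A n).toReal
      ≤ π ^ (2 * m) /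
          ((Nat.factorial (2 * m) : ℝ) *
            ((∑ j ∈ Finset.range (m + 1),
                (-1 : ℝ) ^ j * π ^ (2 * (m - j)) / (Nat.factorial (2 * (m - j)) : ℝ))
              + (-1 : ℝ) ^ m)) *
        ∫ u in (0 : ℝ)..π, (genMod Λ M A (phiTilde m) (u / Λ n)).toReal * Real.sin u := by
  have hn' : (1 : ℤ) ≤ n := by exact_mod_cast hn
  have hL : 0 < Λ n := hΛ.2.2.1 n hn'
  have hc : 0 < ∫ u in (0 : ℝ)..π, (u / π) ^ (2 * m) * sin u :=
    intervalIntegral_pos_of_pos_on (by apply Continuous.intervalIntegrable; fun_prop)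
      (fun u hu => mul_pos (pow_pos (div_pos hu.1 pi_pos) _) (sin_pos_of_pos_of_lt_pi hu.1 hu.2))
      pi_pos
  have hjackson := bestE_toReal_le_integral_genMod_div Λ M A (continuous_phiTilde m)
    (phiTilde_nonneg m) (phiTilde_le_two_pow m) hA hL hc fun k hk => by
      have hw : 1 ≤ |Λ k| / Λ n := (one_le_div hL).2 (hΛ.le_abs_apply hn' hk)
      refine (integral_div_pi_pow_mul_sin_le_integral_phiTilde m hw).trans_eq
        (integral_congr fun u _ => ?_)
      rcases abs_choice (Λ k) with h | h <;> rw [h]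
      · ring_nf
      · rw [← phiTilde_neg]; ring_nf
  rw [integral_div_pi_pow_mul_sin, integral_pow_two_mul_mul_sin, div_div_eq_mul_div]
    at hjackson
  exact hjackson.trans_eq (by ring)

/-- **Corollary 4.** For every positive integer `m` and every `n ∈ ℕ`:
`E_n(A) ≤ (π^{2m}/((2m)! K(m))) · ∫_0^π ω̃_m(A, u/λ_n) sin u du`, where
`K(m) = Σ_{j=0}^m (-1)^j π^{2m-2j}/(2m-2j)! + (-1)^m`. -/
theorem jackson_steklov_modulus
    (Λ : ℤ → ℝ) (M : ℤ → ℝ → ℝ) (A : ℤ → ℂ)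
    (hΛ : IsExponents Λ) (hM : ∀ k, IsOrlicz (M k)) (hA : orliczNorm M A ≠ ⊤)
    (m : ℕ) (hm : 1 ≤ m) (n : ℕ) (hn : 1 ≤ n) :
    (bestE M A n).toReal
      ≤ π ^ (2 * m) /
          ((Nat.factorial (2 * m) : ℝ) *
            ((∑ j ∈ Finset.range (m + 1),
                (-1 : ℝ) ^ j * π ^ (2 * (m - j)) / (Nat.factorial (2 * (m - j)) : ℝ))
              + (-1 : ℝ) ^ m)) *
        ∫ u in (0 : ℝ)..π, (genMod Λ M A (phiTilde m) (u / Λ n)).toReal * Real.sin u :=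
  jackson_steklov_modulus_general Λ M A hΛ hA m n hn

end
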